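/- Fix g ∈ ℝ and set b = 0. For two states u_L = (h_L, h_L u_L, h_L v_L) and u_R = (h_R, h_R u_R, h_R v_R) with h_L, h_R > 0, define the y-direction numerical flux f_S^y(u_L, u_R) = ( ⟨hv⟩, ⟨hv⟩⟨u⟩, ⟨hv⟩⟨v⟩ + g⟨h⟩² − (1/2)g⟨h²⟩ ), where ⟨a⟩ = (a_L + a_R)/2 denotes the arithmetic average. Let v(u) = ( g h − (1/2)(u² + v²), u, v ) be the entropy variables and ψ^y(u) = (1/2) g h² v the y-direction entropy potential. Then the Tadmor entropy conservation condition holds: ( v(u_L) − v(u_R) )ᵀ f_S^y(u_L, u_R) = ψ^y(u_L) − ψ^y(u_R). -/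
import Mathlib


/-- The y-direction entropy conservative numerical flux for the 2D SWE:
`f_S^y(u_L, u_R) = (⟨hv⟩, ⟨hv⟩⟨u⟩, ⟨hv⟩⟨v⟩ + g⟨h⟩² − (1/2)g⟨h²⟩)`, where
states are given in primitive form `(h, u, v)` (so `u = (h, hu, hv)`) and
`⟨·⟩` is the arithmetic average. -/
noncomputable def sweFluxSy (g : ℝ) (pL pR : ℝ × ℝ × ℝ) : ℝ × ℝ × ℝ :=
  ((pL.1 * pL.2.2 + pR.1 * pR.2.2) / 2,
   (pL.1 * pL.2.2 + pR.1 * pR.2.2) / 2 * ((pL.2.1 + pR.2.1) / 2),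
   (pL.1 * pL.2.2 + pR.1 * pR.2.2) / 2 * ((pL.2.2 + pR.2.2) / 2)
     + g * ((pL.1 + pR.1) / 2) ^ 2 - (1/2) * g * ((pL.1 ^ 2 + pR.1 ^ 2) / 2))

/-- The SWE entropy variables with zero bathymetry, in primitive variables:
`v(u) = (gh − (1/2)(u² + v²), u, v)`. -/
noncomputable def sweEntropyVars (g : ℝ) (p : ℝ × ℝ × ℝ) : ℝ × ℝ × ℝ :=
  (g * p.1 - (1/2) * (p.2.1 ^ 2 + p.2.2 ^ 2), p.2.1, p.2.2)

/-- The y-direction entropy potential `ψ^y(u) = (1/2) g h² v`. -/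
noncomputable def swePotentialY (g : ℝ) (p : ℝ × ℝ × ℝ) : ℝ :=
  (1/2) * g * p.1 ^ 2 * p.2.2

/-- the Tadmor entropy conservation condition
`(v(u_L) − v(u_R))ᵀ f_S^y(u_L, u_R) = ψ^y(u_L) − ψ^y(u_R)` holds for the
y-direction SWE flux, for all states with positive water height. -/
theorem swe_y_flux_entropy_conservative (g : ℝ)
    (pL pR : ℝ × ℝ × ℝ) (hhL : 0 < pL.1) (hhR : 0 < pR.1) :
    ((sweEntropyVars g pL).1 - (sweEntropyVars g pR).1) * (sweFluxSy g pL pR).1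
      + ((sweEntropyVars g pL).2.1 - (sweEntropyVars g pR).2.1) * (sweFluxSy g pL pR).2.1
      + ((sweEntropyVars g pL).2.2 - (sweEntropyVars g pR).2.2) * (sweFluxSy g pL pR).2.2
      = swePotentialY g pL - swePotentialY g pR := by
  obtain ⟨hL,uL,vL⟩ := pL; obtain ⟨hR,uR,vR⟩ := pR
  simp only [sweEntropyVars, sweFluxSy, swePotentialY]
  ring
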